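/- arXiv:2510.11980 — 6 statements merged into one kernel-verified Lean document; each statement's English description precedes it below -/
import Mathlib

section
/- Let n ≥ 3 be odd and let m = (n+1)/2 be the middle index. The number of equi-n-squares whose row m is consecutive or reverse-consecutive and which have at least one consecutive or reverse-consecutive column equals 4·(n²−2n+1)! / ((n−1)! · (n−2)!^{n−1}). -/
open Nat Finset Filter

/-- An equi-`n`-square: an `n × n` array with entries in `Fin n` in which
every value appears exactly `n` times. -/
def IsEquiSquare (n : ℕ) (g : Fin n → Fin n → Fin n) : Prop :=
  ∀ k : Fin n, Nat.card {p : Fin n × Fin n // g p.1 p.2 = k} = n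

/-- Row `i` is consecutive (1-indexed: entry in column `j` is `j`). -/
def RowConsec {n : ℕ} (g : Fin n → Fin n → Fin n) (i : Fin n) : Prop :=
  ∀ j : Fin n, g i j = j

/-- Row `i` is reverse-consecutive (1-indexed: entry in column `j` is `n+1-j`). -/
def RowRevConsec {n : ℕ} (g : Fin n → Fin n → Fin n) (i : Fin n) : Prop :=
  ∀ j : Fin n, (g i j : ℕ) + (j : ℕ) + 1 = n

/-- Column `j` is consecutive (1-indexed: entry in row `i` is `i`). -/
def ColConsec {n : ℕ} (g : Fin n → Fin n → Fin n) (j : Fin n) : Prop :=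
  ∀ i : Fin n, g i j = i

/-- Column `j` is reverse-consecutive (1-indexed: entry in row `i` is `n+1-i`). -/
def ColRevConsec {n : ℕ} (g : Fin n → Fin n → Fin n) (j : Fin n) : Prop :=
  ∀ i : Fin n, (g i j : ℕ) + (i : ℕ) + 1 = n

/-! ### Auxiliary counting lemmas -/

section Multinomial

variable {α β : Type*} [Fintype α] [Fintype β] [DecidableEq α] [DecidableEq β]

private lemma fiber_card_perm (σ : Equiv.Perm α) (f : α → β) (b : β) :
    (univ.filter fun a => f (σ a) = b).card = (univ.filter fun a => f a = b).card := by
  apply Finset.card_bij (fun a _ => σ a)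
  · intro a ha; simpa using (Finset.mem_filter.1 ha).2
  · intro a _ a' _ h; exact σ.injective h
  · intro a ha
    exact ⟨σ.symm a, by simpa using (Finset.mem_filter.1 ha).2, by simp⟩

private def fiberFst {γ : β → Type*} (b : β) : {s : Σ b', γ b' // s.1 = b} ≃ γ b where
  toFun s := s.2 ▸ s.1.2
  invFun x := ⟨⟨b, x⟩, rfl⟩
  left_inv := by rintro ⟨⟨b', x⟩, rfl⟩; rfl
  right_inv x := rfl

private def permFiberEquiv (f g : α → β) :
    {σ : Equiv.Perm α // ∀ a, g (σ a) = f a} ≃ ∀ b, {a // f a = b} ≃ {a // g a = b} where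
  toFun σ b := Equiv.subtypeEquiv σ.1 fun a => by rw [σ.2 a]
  invFun e := ⟨Equiv.ofFiberEquiv e, fun a => Equiv.ofFiberEquiv_map e a⟩
  left_inv σ := by
    apply Subtype.ext
    ext a
    simp [Equiv.ofFiberEquiv, Equiv.subtypeEquiv]
  right_inv e := by
    funext b
    apply Equiv.ext
    rintro ⟨a, rfl⟩
    apply Subtype.ext
    simp [Equiv.ofFiberEquiv, Equiv.subtypeEquiv]
    rfl

/-- The multinomial counting principle: the number of functions with prescribed
fiber cardinalities, times the product of factorials of those cardinalities,
is the factorial of the cardinality of the domain. -/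
lemma card_fiber_fun (c : β → ℕ) (hc : ∑ b, c b = Fintype.card α) :
    Nat.card {f : α → β // ∀ b, (univ.filter fun a => f a = b).card = c b}
        * ∏ b, (c b)! = (Fintype.card α)! := by
  classical
  rw [Nat.card_eq_fintype_card]
  have hcard : Fintype.card α = Fintype.card (Σ b, Fin (c b)) := by
    simp [Fintype.card_sigma, hc]
  let e : α ≃ Σ b, Fin (c b) := Fintype.equivOfCardEq hcard
  set f₀ : α → β := fun a => (e a).1 with hf₀def
  have hf₀ : ∀ b, (univ.filter fun a => f₀ a = b).card = c b := by
    intro b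
    rw [← Fintype.card_subtype]
    rw [Fintype.card_congr ((e.subtypeEquiv fun a => Iff.rfl).trans (fiberFst b))]
    simp
  set F := {f : α → β // ∀ b, (univ.filter fun a => f a = b).card = c b} with hF
  let Φ : Equiv.Perm α → F := fun σ =>
    ⟨fun a => f₀ (σ a), fun b => by rw [fiber_card_perm σ f₀ b]; exact hf₀ b⟩
  have key : ∀ f : F, Fintype.card {σ : Equiv.Perm α // Φ σ = f} = ∏ b, (c b)! := by
    intro f
    have e1 : {σ : Equiv.Perm α // Φ σ = f} ≃ {σ : Equiv.Perm α // ∀ a, f₀ (σ a) = f.1 a} := by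
      apply Equiv.subtypeEquivRight
      intro σ
      rw [Subtype.ext_iff, funext_iff]
    rw [Fintype.card_congr (e1.trans (permFiberEquiv f.1 f₀))]
    rw [Fintype.card_pi]
    refine Finset.prod_congr rfl fun b _ => ?_
    have hcb : Fintype.card {a // f.1 a = b} = Fintype.card {a // f₀ a = b} := by
      rw [Fintype.card_subtype, Fintype.card_subtype, f.2 b, hf₀ b]
    rw [Fintype.card_equiv (Fintype.equivOfCardEq hcb), Fintype.card_subtype, f.2 b]
  calc Fintype.card F * ∏ b, (c b)!
      = ∑ _f : F, ∏ b, (c b)! := by rw [Finset.sum_const, Finset.card_univ, smul_eq_mul]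
    _ = ∑ f : F, Fintype.card {σ : Equiv.Perm α // Φ σ = f} := by
        exact (Finset.sum_congr rfl fun f _ => (key f).symm)
    _ = Fintype.card (Σ f : F, {σ : Equiv.Perm α // Φ σ = f}) := by rw [Fintype.card_sigma]
    _ = Fintype.card (Equiv.Perm α) := Fintype.card_congr (Equiv.sigmaFiberEquiv Φ)
    _ = (Fintype.card α)! := Fintype.card_perm

end Multinomial

section Squares

variable {n : ℕ}

/-- Cells outside the middle row and middle column. -/
abbrev OffCell (n : ℕ) (m : Fin n) := {p : Fin n × Fin n // p.1 ≠ m ∧ p.2 ≠ m}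

/-- Identity or reversal permutation, according to a boolean. -/
def RE (n : ℕ) (b : Bool) : Equiv.Perm (Fin n) := bif b then Fin.revPerm else Equiv.refl _

lemma RE_fixed {m : Fin n} (hm : 2 * ((m : ℕ) + 1) = n + 1) (b : Bool) : RE n b m = m := by
  cases b with
  | false => rfl
  | true =>
    apply Fin.ext
    simp only [RE, cond_true, Fin.revPerm_apply, Fin.val_rev]
    omega

lemma RE_symm_fixed {m : Fin n} (hm : 2 * ((m : ℕ) + 1) = n + 1) (b : Bool) :
    (RE n b).symm m = m := by
  rw [Equiv.symm_apply_eq, RE_fixed hm]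

/-- Splitting a count of cells into middle row, middle column, and the rest. -/
lemma card_split (m : Fin n) (P : Fin n × Fin n → Prop) [DecidablePred P] :
    (univ.filter P).card
      = (univ.filter fun j => P (m, j)).card
        + ((univ.filter fun i => i ≠ m ∧ P (i, m)).card
        + (univ.filter fun a : OffCell n m => P a.1).card) := by
  classical
  rw [← Finset.card_filter_add_card_filter_not (s := univ.filter P)
      (p := fun p => p.1 = m)]
  congr 1
  · refine Finset.card_bij' (fun p _ => p.2) (fun j _ => (m, j)) ?_ ?_ ?_ ?_
    · intro p hp
      simp only [Finset.mem_filter, Finset.mem_univ, true_and] at hp ⊢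
      obtain ⟨h1, h2⟩ := hp
      rwa [← h2, Prod.mk.eta]
    · intro j hj
      simp only [Finset.mem_filter, Finset.mem_univ, true_and] at hj ⊢
      exact ⟨hj, trivial⟩
    · intro p hp
      simp only [Finset.mem_filter] at hp
      exact Prod.ext_iff.2 ⟨hp.2.symm, rfl⟩
    · intro j _; rfl
  · rw [← Finset.card_filter_add_card_filter_not
        (s := (univ.filter P).filter fun p => ¬p.1 = m) (p := fun p => p.2 = m)]
    congr 1
    · refine Finset.card_bij' (fun p _ => p.1) (fun i _ => (i, m)) ?_ ?_ ?_ ?_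
      · intro p hp
        simp only [Finset.mem_filter, Finset.mem_univ, true_and] at hp ⊢
        obtain ⟨⟨h1, h2⟩, h3⟩ := hp
        refine ⟨h2, ?_⟩
        rwa [← h3, Prod.mk.eta]
      · intro i hi
        simp only [Finset.mem_filter, Finset.mem_univ, true_and] at hi ⊢
        exact ⟨⟨hi.2, hi.1⟩, trivial⟩
      · intro p hp
        simp only [Finset.mem_filter] at hp
        exact Prod.ext_iff.2 ⟨rfl, hp.2.symm⟩
      · intro i _; rfl
    · refine Finset.card_bij' (fun (p : Fin n × Fin n) hp =>
        (⟨p, by simp only [Finset.mem_filter] at hp; exact ⟨hp.1.2, hp.2⟩⟩ : OffCell n m))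
        (fun a _ => a.1) ?_ ?_ ?_ ?_
      · intro p hp
        simp only [Finset.mem_filter, Finset.mem_univ, true_and] at hp ⊢
        exact hp.1.1
      · intro a ha
        simp only [Finset.mem_filter, Finset.mem_univ, true_and] at ha ⊢
        exact ⟨⟨ha, a.2.1⟩, a.2.2⟩
      · intro p _; rfl
      · intro a _; rfl

lemma filter_RE (b : Bool) (k : Fin n) :
    (univ.filter fun j => RE n b j = k) = {(RE n b).symm k} := by
  ext j
  simp [Equiv.apply_eq_iff_eq_symm_apply]

lemma filter_RE_ne {m : Fin n} (hm : 2 * ((m : ℕ) + 1) = n + 1) (b : Bool) (k : Fin n) :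
    (univ.filter fun i => i ≠ m ∧ RE n b i = k).card = if k = m then 0 else 1 := by
  split_ifs with hk
  · subst hk
    rw [Finset.card_eq_zero]
    ext i
    simp only [Finset.mem_filter, Finset.mem_univ, true_and, Finset.notMem_empty, iff_false,
      not_and]
    intro hi hRE
    exact hi (by rwa [← RE_fixed hm b, Equiv.apply_eq_iff_eq] at hRE)
  · rw [show (univ.filter fun i => i ≠ m ∧ RE n b i = k) = {(RE n b).symm k} from ?_]
    · exact Finset.card_singleton _
    ext i
    simp only [Finset.mem_filter, Finset.mem_univ, true_and, Finset.mem_singleton]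
    constructor
    · rintro ⟨-, h⟩; rw [← h, Equiv.symm_apply_apply]
    · rintro rfl
      refine ⟨fun h => hk ?_, Equiv.apply_symm_apply _ _⟩
      rw [← RE_symm_fixed hm b] at h
      exact ((RE n b).symm.injective h).symm ▸ rfl

/-- The key accounting: a square whose middle row and column are given by
`RE b`, `RE c` has, for each value `k`, one (if `k = m`) or two (otherwise)
occurrences of `k` on the middle cross, plus the occurrences off the cross. -/
lemma fiber_split {m : Fin n} (hm : 2 * ((m : ℕ) + 1) = n + 1) (b c : Bool)
    (g : Fin n → Fin n → Fin n) (hrow : ∀ j, g m j = RE n b j) (hcol : ∀ i, g i m = RE n c i)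
    (k : Fin n) :
    (univ.filter fun p : Fin n × Fin n => g p.1 p.2 = k).card
      = (if k = m then 1 else 2)
        + (univ.filter fun a : OffCell n m => g a.1.1 a.1.2 = k).card := by
  rw [card_split m]
  have h1 : (univ.filter fun j => g m j = k) = (univ.filter fun j => RE n b j = k) := by
    apply Finset.filter_congr; intro j _; rw [hrow j]
  have h2 : (univ.filter fun i => i ≠ m ∧ g i m = k)
      = (univ.filter fun i => i ≠ m ∧ RE n c i = k) := by
    apply Finset.filter_congr; intro i _; rw [hcol i]
  rw [h1, filter_RE, Finset.card_singleton, h2, filter_RE_ne hm]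
  split_ifs <;> omega

lemma natcard_subtype {γ : Type*} [Fintype γ] (P : γ → Prop) [DecidablePred P] :
    Nat.card {x // P x} = (univ.filter P).card := by
  rw [Nat.card_eq_fintype_card, Fintype.card_subtype]

/-- Reconstructing a square from the two booleans and the off-cross values. -/
def build (n : ℕ) (m : Fin n) (b c : Bool) (f : OffCell n m → Fin n) :
    Fin n → Fin n → Fin n := fun i j =>
  if hi : i = m then RE n b j else if hj : j = m then RE n c i else f ⟨(i, j), hi, hj⟩

lemma build_row (m : Fin n) (b c : Bool) (f : OffCell n m → Fin n) (j : Fin n) :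
    build n m b c f m j = RE n b j := dif_pos rfl

lemma build_col' (m : Fin n) (b c : Bool) (f : OffCell n m → Fin n) {i : Fin n} (hi : i ≠ m) :
    build n m b c f i m = RE n c i := by
  rw [build, dif_neg hi, dif_pos rfl]

lemma build_col {m : Fin n} (hm : 2 * ((m : ℕ) + 1) = n + 1) (b c : Bool)
    (f : OffCell n m → Fin n) (i : Fin n) : build n m b c f i m = RE n c i := by
  by_cases hi : i = m
  · subst hi
    rw [build_row, RE_fixed hm, RE_fixed hm]
  · exact build_col' m b c f hi

lemma build_off (m : Fin n) (b c : Bool) (f : OffCell n m → Fin n) (a : OffCell n m) :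
    build n m b c f a.1.1 a.1.2 = f a := by
  rw [build, dif_neg a.2.1, dif_neg a.2.2]

lemma arith1 {n : ℕ} (hn : 3 ≤ n) : (n - 1) + (n - 1) * (n - 2) = (n - 1) * (n - 1) := by
  obtain ⟨a, rfl⟩ : ∃ a, n = a + 3 := ⟨n - 3, by omega⟩
  have e1 : a + 3 - 1 = a + 2 := by omega
  have e2 : a + 3 - 2 = a + 1 := by omega
  rw [e1, e2]
  ring

lemma arith2 {n : ℕ} (hn : 2 ≤ n) : n ^ 2 - 2 * n + 1 = (n - 1) * (n - 1) := by
  obtain ⟨a, rfl⟩ : ∃ a, n = a + 2 := ⟨n - 2, by omega⟩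
  have h : (a + 2) ^ 2 = a * a + 4 * a + 4 := by ring
  have h1 : a + 2 - 1 = a + 1 := by omega
  have h2 : (a + 1) * (a + 1) = a * a + 2 * a + 1 := by ring
  rw [h, h1, h2]
  generalize a * a = t
  omega

end Squares

set_option maxHeartbeats 1000000 in
/-- For odd `n ≥ 3` with middle index `m` (1-indexed, `m = (n+1)/2`), the number of
equi-`n`-squares whose middle row is consecutive or reverse-consecutive and which have
at least one consecutive or reverse-consecutive column equals
`4·(n²−2n+1)! / ((n−1)!·(n−2)!^{n−1})`. -/
theorem card_middleRow_and_col (n : ℕ) (hn : 3 ≤ n) (hodd : Odd n)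
    (m : Fin n) (hm : 2 * ((m : ℕ) + 1) = n + 1) :
    (Nat.card {g : Fin n → Fin n → Fin n //
        IsEquiSquare n g ∧ (RowConsec g m ∨ RowRevConsec g m) ∧
          ∃ j : Fin n, ColConsec g j ∨ ColRevConsec g j} : ℚ) =
      4 * ((n ^ 2 - 2 * n + 1)! : ℚ) / (((n - 1)! : ℚ) * ((n - 2)! : ℚ) ^ (n - 1)) := by
  classical
  have hmn : (m : ℕ) < n := m.isLt
  have hm1 : 1 ≤ (m : ℕ) := by omega
  set cnt : Fin n → ℕ := fun k => if k = m then n - 1 else n - 2 with hcnt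
  set F := {f : OffCell n m → Fin n // ∀ k, (univ.filter fun a => f a = k).card = cnt k}
    with hF
  set S := {g : Fin n → Fin n → Fin n //
      IsEquiSquare n g ∧ (RowConsec g m ∨ RowRevConsec g m) ∧
        ∃ j : Fin n, ColConsec g j ∨ ColRevConsec g j} with hS
  -- the bijection
  have hΨmem : ∀ (b c : Bool) (f : F),
      IsEquiSquare n (build n m b c f.1) ∧
        (RowConsec (build n m b c f.1) m ∨ RowRevConsec (build n m b c f.1) m) ∧
          ∃ j : Fin n, ColConsec (build n m b c f.1) j ∨ ColRevConsec (build n m b c f.1) j := by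
    intro b c f
    refine ⟨?_, ?_, ⟨m, ?_⟩⟩
    · intro k
      rw [natcard_subtype, fiber_split hm b c _ (build_row m b c f.1) (build_col hm b c f.1) k]
      have : (univ.filter fun a : OffCell n m => build n m b c f.1 a.1.1 a.1.2 = k)
          = (univ.filter fun a : OffCell n m => f.1 a = k) := by
        apply Finset.filter_congr; intro a _; rw [build_off]
      rw [this, f.2 k, hcnt]
      simp only
      split_ifs <;> omega
    · cases b with
      | false => exact Or.inl fun j => build_row m false c f.1 j
      | true =>
        refine Or.inr fun j => ?_
        rw [build_row]
        have : ((RE n true j : Fin n) : ℕ) = n - ((j : ℕ) + 1) := by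
          simp [RE, Fin.val_rev]
        rw [this]
        have := j.isLt
        omega
    · cases c with
      | false => exact Or.inl fun i => build_col hm b false f.1 i
      | true =>
        refine Or.inr fun i => ?_
        rw [build_col hm]
        have : ((RE n true i : Fin n) : ℕ) = n - ((i : ℕ) + 1) := by
          simp [RE, Fin.val_rev]
        rw [this]
        have := i.isLt
        omega
  let Ψ : Bool × Bool × F → S := fun x =>
    ⟨build n m x.1 x.2.1 x.2.2.1, hΨmem x.1 x.2.1 x.2.2⟩
  have hΨbij : Function.Bijective Ψ := by
    constructor
    · rintro ⟨b, c, f⟩ ⟨b', c', f'⟩ h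
      have hg : build n m b c f.1 = build n m b' c' f'.1 := congrArg Subtype.val h
      have hz : (0 : ℕ) < n := by omega
      have hb : b = b' := by
        have h0 := congrFun (congrFun hg m) ⟨0, hz⟩
        rw [build_row, build_row] at h0
        cases b <;> cases b' <;> first
          | rfl
          | (exfalso
             have := congrArg Fin.val h0
             simp [RE, Fin.val_rev] at this
             omega)
      have hi0 : (⟨0, hz⟩ : Fin n) ≠ m := by
        intro hcon
        have := congrArg Fin.val hcon
        simp at this
        omega
      have hc : c = c' := by
        have h0 := congrFun (congrFun hg ⟨0, hz⟩) m
        rw [build_col' m b c f.1 hi0, build_col' m b' c' f'.1 hi0] at h0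
        cases c <;> cases c' <;> first
          | rfl
          | (exfalso
             have := congrArg Fin.val h0
             simp [RE, Fin.val_rev] at this
             omega)
      have hf : f = f' := by
        apply Subtype.ext
        funext a
        have h0 := congrFun (congrFun hg a.1.1) a.1.2
        rwa [build_off, build_off] at h0
      subst hb; subst hc; subst hf; rfl
    · rintro ⟨g, hsq, hrow, j, hcol⟩
      -- row boolean
      obtain ⟨b, hb⟩ : ∃ b : Bool, ∀ j', g m j' = RE n b j' := by
        rcases hrow with h | h
        · exact ⟨false, fun j' => h j'⟩
        · refine ⟨true, fun j' => Fin.ext ?_⟩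
          have h1 := h j'
          have h2 := j'.isLt
          simp only [RE, cond_true, Fin.revPerm_apply, Fin.val_rev]
          omega
      -- the column witness is the middle column
      have hjm : j = m := by
        have h1 := hb j
        rcases hcol with h | h
        · have h2 := h m
          have h3 : RE n b j = RE n b m := by
            rw [RE_fixed hm, ← h1, h2]
          exact (RE n b).injective h3
        · have h2 := h m
          rw [h1] at h2
          apply Fin.ext
          have h4 := j.isLt
          cases b with
          | false =>
            have h3 : ((RE n false j : Fin n) : ℕ) = (j : ℕ) := rfl
            rw [h3] at h2
            omega
          | true =>
            have h5 : ((RE n true j : Fin n) : ℕ) = n - ((j : ℕ) + 1) := by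
              simp [RE, Fin.val_rev]
            rw [h5] at h2
            omega
      rw [hjm] at hcol
      -- column boolean
      obtain ⟨c, hc⟩ : ∃ c : Bool, ∀ i, g i m = RE n c i := by
        rcases hcol with h | h
        · exact ⟨false, fun i => h i⟩
        · refine ⟨true, fun i => Fin.ext ?_⟩
          have h1 := h i
          have h2 := i.isLt
          simp only [RE, cond_true, Fin.revPerm_apply, Fin.val_rev]
          omega
      -- off-cross restriction
      refine ⟨⟨b, c, ⟨fun a => g a.1.1 a.1.2, ?_⟩⟩, ?_⟩
      · intro k
        have h1 := hsq k
        rw [natcard_subtype, fiber_split hm b c g hb hc k] at h1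
        rw [hcnt]
        simp only
        split_ifs at h1 ⊢ <;> omega
      · apply Subtype.ext
        funext i j'
        simp only [Ψ]
        by_cases hi : i = m
        · rw [hi, build_row, hb]
        · by_cases hj' : j' = m
          · rw [hj', build_col' m b c _ hi, hc]
          · rw [build, dif_neg hi, dif_neg hj']
      -- end surjectivity
  -- cardinality bookkeeping
  have hcard1 : Nat.card S = 4 * Nat.card F := by
    rw [← Nat.card_eq_of_bijective Ψ hΨbij, Nat.card_prod, Nat.card_prod,
      show Nat.card Bool = 2 by simp [Nat.card_eq_fintype_card]]
    ring
  -- size of the off-cross region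
  have hOff : Fintype.card (OffCell n m) = (n - 1) * (n - 1) := by
    rw [Fintype.card_congr (Equiv.subtypeProdEquivProd (p := fun i => i ≠ m)
      (q := fun j => j ≠ m)), Fintype.card_prod]
    have h1 : Fintype.card {i : Fin n // i ≠ m} = n - 1 := by
      rw [Fintype.card_subtype_compl, Fintype.card_subtype_eq, Fintype.card_fin]
    rw [h1]
  -- sum of prescribed multiplicities
  have hcm : cnt m = n - 1 := by simp [hcnt]
  have hsum : ∑ k : Fin n, cnt k = Fintype.card (OffCell n m) := by
    have hconst : ∀ k ∈ univ.erase m, cnt k = n - 2 := by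
      intro k hk
      simp only [hcnt]
      rw [if_neg (Finset.mem_erase.1 hk).1]
    rw [hOff, ← Finset.add_sum_erase _ cnt (Finset.mem_univ m),
      Finset.sum_congr rfl hconst, Finset.sum_const,
      Finset.card_erase_of_mem (Finset.mem_univ m), Finset.card_univ, Fintype.card_fin,
      smul_eq_mul, hcm]
    exact arith1 hn
  -- product of factorials
  have hprod : ∏ k : Fin n, (cnt k)! = (n - 1)! * (n - 2)! ^ (n - 1) := by
    have hconst : ∀ k ∈ univ.erase m, (cnt k)! = (n - 2)! := by
      intro k hk
      simp only [hcnt]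
      rw [if_neg (Finset.mem_erase.1 hk).1]
    rw [← Finset.mul_prod_erase _ (fun k => (cnt k)!) (Finset.mem_univ m),
      Finset.prod_congr rfl hconst, Finset.prod_const,
      Finset.card_erase_of_mem (Finset.mem_univ m), Finset.card_univ, Fintype.card_fin, hcm]
  have hmain := card_fiber_fun cnt hsum
  rw [hprod, hOff] at hmain
  -- final arithmetic
  have hNN : n ^ 2 - 2 * n + 1 = (n - 1) * (n - 1) := arith2 (Nat.le_of_succ_le hn)
  have hmainN : Nat.card F * ((n - 1)! * (n - 2)! ^ (n - 1)) = ((n - 1) * (n - 1))! := hmain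
  rw [hcard1, hNN]
  have hD : (((n - 1)! : ℚ) * ((n - 2)! : ℚ) ^ (n - 1)) ≠ 0 := by
    positivity
  rw [eq_div_iff hD]
  have hcast := congrArg (fun x : ℕ => (x : ℚ)) hmainN
  push_cast at hcast ⊢
  linear_combination 4 * hcast
end

section
/- Let n ≥ 2 and let i be an index with 2i ≠ n+1 (i.e. i is not the middle index). The number of equi-n-squares whose row i is consecutive or reverse-consecutive and whose column i is consecutive or reverse-consecutive equals 2·(n²−2n+1)! / ((n−1)! · (n−2)!^{n−1}). -/
open Nat Finset Filter

/-!
Reversing all values, `k ↦ n - 1 - k`, preserves equi-squares and swaps consecutive with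
reverse-consecutive lines, while for a non-middle index the diagonal entry `g i i` rules out a
consecutive line crossing a reverse-consecutive one. So the count is twice the number of
equi-squares whose row `i` and column `i` are both consecutive. Such a square is an arbitrary
filling of the `(n - 1)²` cells off row and column `i` in which `i` occurs `n - 1` times and every
other value `n - 2` times; by orbit–stabilizer for permutations of the cells acting on fillings,
there are `((n - 1)²)! / ((n - 1)! (n - 2)!^(n - 1))` of them.
-/

open Equiv MulAction

section FiberCount

variable {α β : Type*} [Finite α]

theorem mem_orbit_domMulAct_iff {f₀ f : α → β} :
    f ∈ orbit (Perm α)ᵈᵐᵃ f₀ ↔ ∀ b, Nat.card {a // f a = b} = Nat.card {a // f₀ a = b} := by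
  constructor
  · rintro ⟨σ, rfl⟩ b
    exact Nat.card_congr ((DomMulAct.mk.symm σ).subtypeEquiv (q := fun a => f₀ a = b)
      fun _ => Iff.rfl)
  · intro h
    have e (b : β) : {a // f a = b} ≃ {a // f₀ a = b} := (Finite.card_eq.mp (h b)).some
    exact ⟨DomMulAct.mk (ofFiberEquiv e), funext (ofFiberEquiv_map e)⟩

variable [Fintype β]

theorem exists_card_fiber_eq (m : β → ℕ) (hm : ∑ b, m b = Nat.card α) :
    ∃ f : α → β, ∀ b, Nat.card {a // f a = b} = m b := by
  obtain ⟨e⟩ : Nonempty (α ≃ Σ b, Fin (m b)) := Finite.card_eq.mp (by simp [hm])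
  refine ⟨fun a => (e a).1, fun b => ?_⟩
  rw [Nat.card_congr ((e.subtypeEquiv fun _ => Iff.rfl).trans (sigmaSubtype b)), Nat.card_fin]

theorem card_stabilizer_domMulAct (f : α → β) :
    Nat.card (stabilizer (Perm α)ᵈᵐᵃ f) = ∏ b, (Nat.card {a // f a = b})! := by
  rw [Nat.card_congr MulOpposite.opEquiv, Nat.card_congr (DomMulAct.stabilizerMulEquiv f).toEquiv,
    Nat.card_pi]
  simp only [Nat.card_perm]

theorem card_fun_card_fiber_eq_mul_prod_factorial (m : β → ℕ) (hm : ∑ b, m b = Nat.card α) :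
    Nat.card {f : α → β // ∀ b, Nat.card {a // f a = b} = m b} * ∏ b, (m b)! = (Nat.card α)! := by
  obtain ⟨f₀, hf₀⟩ := exists_card_fiber_eq m hm
  have horbit : orbit (Perm α)ᵈᵐᵃ f₀ ≃ {f : α → β // ∀ b, Nat.card {a // f a = b} = m b} :=
    Equiv.subtypeEquivRight fun f => by simp only [← hf₀]; exact mem_orbit_domMulAct_iff
  calc _ = Nat.card (orbit (Perm α)ᵈᵐᵃ f₀ × stabilizer (Perm α)ᵈᵐᵃ f₀) := by
        rw [Nat.card_prod, card_stabilizer_domMulAct, Nat.card_congr horbit]; simp only [hf₀]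
    _ = (Nat.card α)! := by
        rw [Nat.card_congr (orbitProdStabilizerEquivGroup _ f₀), Nat.card_congr DomMulAct.mk.symm,
          Nat.card_perm]

end FiberCount

section Square

variable {n : ℕ} {g : Fin n → Fin n → Fin n} {i : Fin n}

def revEntries : Perm (Fin n → Fin n → Fin n) :=
  Equiv.piCongrRight fun _ => Equiv.piCongrRight fun _ => Fin.revPerm

theorem isEquiSquare_revEntries_iff : IsEquiSquare n (revEntries g) ↔ IsEquiSquare n g := by
  refine Fin.revPerm.forall_congr fun k => ?_
  simp [revEntries, Fin.rev_eq_iff]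

theorem rowConsec_revEntries_iff : RowConsec (revEntries g) i ↔ RowRevConsec g i :=
  forall_congr' fun j => by simp [revEntries, Fin.ext_iff]; omega

theorem colConsec_revEntries_iff : ColConsec (revEntries g) i ↔ ColRevConsec g i :=
  forall_congr' fun j => by simp [revEntries, Fin.ext_iff]; omega

theorem not_revConsec_of_consec (hi : 2 * (i : ℕ) + 1 ≠ n) (h : RowConsec g i ∨ ColConsec g i) :
    ¬(RowRevConsec g i ∨ ColRevConsec g i) := by
  have hdiag : g i i = i := h.elim (· i) (· i)
  rintro (h' | h') <;> have := h' i <;> rw [hdiag] at this <;> omega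

variable (n) in
abbrev FreeCell (i : Fin n) := {p : Fin n × Fin n // p.1 ≠ i ∧ p.2 ≠ i}

theorem card_freeCell : Nat.card (FreeCell n i) = (n - 1) ^ 2 := by
  rw [Nat.card_congr (subtypeProdEquivProd (p := (· ≠ i)) (q := (· ≠ i))), Nat.card_prod, sq]
  simp [Nat.card_eq_fintype_card, Fintype.card_subtype_compl]

theorem card_fiber_of_consec (hr : RowConsec g i) (hc : ColConsec g i) (k : Fin n) :
    Nat.card {p : Fin n × Fin n // g p.1 p.2 = k} =
      Nat.card {c : FreeCell n i // g c.1.1 c.1.2 = k} + if k = i then 1 else 2 := by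
  rw [← Nat.card_congr (Equiv.sumCompl fun p : {p : Fin n × Fin n // g p.1 p.2 = k} =>
    p.1.1 ≠ i ∧ p.1.2 ≠ i), Nat.card_sum]
  congr 1
  · exact Nat.card_congr <| (subtypeSubtypeEquivSubtypeInter _ _).trans <|
      (subtypeEquivRight fun _ => and_comm).trans
        (subtypeSubtypeEquivSubtypeInter (fun p : Fin n × Fin n => p.1 ≠ i ∧ p.2 ≠ i) _).symm
  · have hcross : ∀ p : Fin n × Fin n, g p.1 p.2 = k ∧ ¬(p.1 ≠ i ∧ p.2 ≠ i) ↔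
        p ∈ ({(i, k), (k, i)} : Finset _) := by
      rintro ⟨a, b⟩
      have := hr b
      have := hc a
      simp only [mem_insert, mem_singleton, Prod.mk.injEq]
      grind
    rw [Nat.card_congr ((subtypeSubtypeEquivSubtypeInter _ _).trans (subtypeEquivRight hcross)),
      Nat.card_eq_finsetCard]
    split_ifs with hk
    · simp [hk]
    · exact card_pair (by simp [hk])

theorem isEquiSquare_iff_of_consec (hr : RowConsec g i) (hc : ColConsec g i) :
    IsEquiSquare n g ↔
      ∀ k, Nat.card {c : FreeCell n i // g c.1.1 c.1.2 = k} = if k = i then n - 1 else n - 2 :=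
  forall_congr' fun k => by
    rw [card_fiber_of_consec hr hc]
    have := i.isLt
    split_ifs with hk
    · omega
    · have := Fin.val_ne_of_ne hk
      omega

def consecCrossEquiv :
    {g : Fin n → Fin n → Fin n // RowConsec g i ∧ ColConsec g i} ≃ (FreeCell n i → Fin n) where
  toFun g c := g.1 c.1.1 c.1.2
  invFun f := ⟨fun a b => if ha : a = i then b else if hb : b = i then a else f ⟨(a, b), ha, hb⟩,
    fun j => by simp, fun a => by by_cases ha : a = i <;> simp [ha]⟩
  left_inv g := by
    ext a b
    dsimp only
    split_ifs with ha hb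
    · rw [ha, g.2.1]
    · rw [hb, g.2.2]
    · rfl
  right_inv f := by
    ext ⟨⟨a, b⟩, ha, hb⟩
    simp [ha, hb]

variable (i) in
theorem card_equiSquare_rowConsec_colConsec_mul :
    Nat.card {g : Fin n → Fin n → Fin n // IsEquiSquare n g ∧ RowConsec g i ∧ ColConsec g i} *
      ((n - 1)! * (n - 2)! ^ (n - 1)) = ((n - 1) ^ 2)! := by
  set m : Fin n → ℕ := fun k => if k = i then n - 1 else n - 2
  have e : {g // IsEquiSquare n g ∧ RowConsec g i ∧ ColConsec g i} ≃
      {f : FreeCell n i → Fin n // ∀ k, Nat.card {c // f c = k} = m k} :=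
    (subtypeEquivRight fun _ => and_comm).trans <|
      (subtypeSubtypeEquivSubtypeInter (fun g => RowConsec g i ∧ ColConsec g i) _).symm.trans <|
        consecCrossEquiv.subtypeEquiv fun g => isEquiSquare_iff_of_consec g.2.1 g.2.2
  have hsum : ∑ k, m k = Nat.card (FreeCell n i) := by
    rw [card_freeCell, Fintype.sum_eq_add_sum_compl i]
    simp only [m]
    rw [if_pos trivial,
      sum_congr rfl fun k hk => by rw [if_neg (by simpa using hk)], sum_const, card_compl,
      card_singleton, Fintype.card_fin, smul_eq_mul]
    rcases n with _ | _ | n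
    · exact i.elim0
    · rfl
    · rw [show n + 1 + 1 - 2 = n by omega, add_tsub_cancel_right]; ring
  have hprod : ∏ k, (m k)! = (n - 1)! * (n - 2)! ^ (n - 1) := by
    rw [Fintype.prod_eq_mul_prod_compl i]
    simp only [m]
    rw [if_pos trivial,
      prod_congr rfl fun k hk => by rw [if_neg (by simpa using hk)], prod_const, card_compl,
      card_singleton, Fintype.card_fin]
  rw [Nat.card_congr e, ← hprod, ← card_freeCell]
  exact card_fun_card_fiber_eq_mul_prod_factorial m hsum

theorem card_equiSquare_consec_or_revConsec_eq_two_mul (hi : 2 * (i : ℕ) + 1 ≠ n) :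
    Nat.card {g // IsEquiSquare n g ∧ (RowConsec g i ∨ RowRevConsec g i) ∧
        (ColConsec g i ∨ ColRevConsec g i)} =
      2 * Nat.card {g // IsEquiSquare n g ∧ RowConsec g i ∧ ColConsec g i} := by
  classical
  have hiff (g : Fin n → Fin n → Fin n) : (IsEquiSquare n g ∧ (RowConsec g i ∨ RowRevConsec g i) ∧
      (ColConsec g i ∨ ColRevConsec g i)) ↔ (IsEquiSquare n g ∧ RowConsec g i ∧ ColConsec g i) ∨
        (IsEquiSquare n g ∧ RowRevConsec g i ∧ ColRevConsec g i) := by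
    have := @not_revConsec_of_consec _ g i hi
    tauto
  have hdisj : Disjoint (fun g => IsEquiSquare n g ∧ RowConsec g i ∧ ColConsec g i)
      (fun g => IsEquiSquare n g ∧ RowRevConsec g i ∧ ColRevConsec g i) := by
    simp only [Pi.disjoint_iff, Prop.disjoint_iff]
    exact fun g ⟨⟨_, hr, _⟩, ⟨_, hr', _⟩⟩ => not_revConsec_of_consec hi (.inl hr) (.inl hr')
  have hrev : {g // IsEquiSquare n g ∧ RowRevConsec g i ∧ ColRevConsec g i} ≃
      {g // IsEquiSquare n g ∧ RowConsec g i ∧ ColConsec g i} :=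
    revEntries.subtypeEquiv fun g => by
      rw [isEquiSquare_revEntries_iff, rowConsec_revEntries_iff, colConsec_revEntries_iff]
  rw [Nat.card_congr ((subtypeEquivRight hiff).trans (subtypeOrEquiv _ _ hdisj)), Nat.card_sum,
    Nat.card_congr hrev, two_mul]

end Square

theorem card_rowI_colI_general (n : ℕ) (i : Fin n)
    (hi : 2 * ((i : ℕ) + 1) ≠ n + 1) :
    (Nat.card {g : Fin n → Fin n → Fin n //
        IsEquiSquare n g ∧ (RowConsec g i ∨ RowRevConsec g i) ∧
          (ColConsec g i ∨ ColRevConsec g i)} : ℚ) =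
      2 * ((n ^ 2 - 2 * n + 1)! : ℚ) / (((n - 1)! : ℚ) * ((n - 2)! : ℚ) ^ (n - 1)) := by
  have hn : 2 ≤ n := by have := i.isLt; omega
  have hsq : n ^ 2 - 2 * n + 1 = (n - 1) ^ 2 := by
    have h2n : 2 * n ≤ n ^ 2 := by nlinarith
    zify [h2n, (by omega : 1 ≤ n)]
    ring
  rw [card_equiSquare_consec_or_revConsec_eq_two_mul (by omega), hsq, eq_div_iff (by positivity),
    ← card_equiSquare_rowConsec_colConsec_mul i]
  push_cast
  ring

/-- For `n ≥ 2` and a non-middle index `i` (1-indexed: `2(i) ≠ n+1`), the number of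
equi-`n`-squares whose row `i` and column `i` are each consecutive or reverse-consecutive
equals `2·(n²−2n+1)! / ((n−1)!·(n−2)!^{n−1})`. -/
theorem card_rowI_colI (n : ℕ) (hn : 2 ≤ n) (i : Fin n)
    (hi : 2 * ((i : ℕ) + 1) ≠ n + 1) :
    (Nat.card {g : Fin n → Fin n → Fin n //
        IsEquiSquare n g ∧ (RowConsec g i ∨ RowRevConsec g i) ∧
          (ColConsec g i ∨ ColRevConsec g i)} : ℚ) =
      2 * ((n ^ 2 - 2 * n + 1)! : ℚ) / (((n - 1)! : ℚ) * ((n - 2)! : ℚ) ^ (n - 1)) :=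
  card_rowI_colI_general n i hi
end

section
/- Let n ≥ 3 and let i be an index with 2i ≠ n+1, and set i' = n+1−i. The number of equi-n-squares whose row i, column i, and column i' are each consecutive or reverse-consecutive equals 2·(n²−3n+2)! / ((n−2)!² · (n−3)!^{n−2}). -/
open Nat Finset Filter

set_option linter.unusedSectionVars false
set_option maxHeartbeats 1000000

def sigmaFiberSubtypeEquiv {β : Type*} (p : β → Type*) (b : β) :
    {x : Σ c, p c // x.1 = b} ≃ p b where
  toFun x := x.2 ▸ x.1.2
  invFun y := ⟨⟨b, y⟩, rfl⟩
  left_inv := fun ⟨⟨c, y⟩, h⟩ => by subst h; rfl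
  right_inv y := rfl

section Count
variable {α β : Type*} [Fintype α] [Fintype β] [DecidableEq β] (m : β → ℕ)

private def D (e : α ≃ Σ b : β, Fin (m b)) (b : β) :
    {a // (e a).1 = b} ≃ Fin (m b) :=
  (Equiv.subtypeEquiv e (fun _ => Iff.rfl)).trans (sigmaFiberSubtypeEquiv _ b)

private lemma hD (e : α ≃ Σ b : β, Fin (m b)) (b : β) :
    Nat.card {a // (e a).1 = b} = m b := by
  rw [Nat.card_congr (D m e b), Nat.card_eq_fintype_card, Fintype.card_fin]

private def PhiEquiv : (α ≃ Σ b : β, Fin (m b)) ≃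
    Σ f : {f : α → β // ∀ b, Nat.card {a // f a = b} = m b},
      ∀ b, ({a // (f : α → β) a = b} ≃ Fin (m b)) where
  toFun e := ⟨⟨fun a => (e a).1, hD m e⟩, D m e⟩
  invFun x := (Equiv.sigmaFiberEquiv x.1.1).symm.trans (Equiv.sigmaCongrRight x.2)
  left_inv e := Equiv.ext fun a => rfl
  right_inv := fun ⟨⟨f, hf⟩, d⟩ => by
    dsimp only
    refine Sigma.ext rfl (heq_of_eq ?_)
    funext b
    apply Equiv.ext
    rintro ⟨a, h⟩
    dsimp at h
    subst h
    rfl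

lemma card_fiber_count (hm : ∑ b, m b = Fintype.card α) :
    Nat.card {f : α → β // ∀ b, Nat.card {a // f a = b} = m b} * ∏ b, (m b)! =
      (Fintype.card α)! := by
  classical
  have hcard : Fintype.card (Σ b : β, Fin (m b)) = Fintype.card α := by
    simp [Fintype.card_sigma, hm]
  have e0 : α ≃ Σ b : β, Fin (m b) := (Fintype.equivOfCardEq hcard).symm
  have h1 : Nat.card (α ≃ Σ b : β, Fin (m b)) = (Fintype.card α)! := by
    rw [Nat.card_eq_fintype_card, Fintype.card_equiv e0]
  rw [← h1, Nat.card_congr (PhiEquiv m)]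
  have h2 : Nat.card ((f : {f : α → β // ∀ b, Nat.card {a // f a = b} = m b}) ×
      ((b : β) → ({a // (f : α → β) a = b} ≃ Fin (m b)))) =
      ∑ f : {f : α → β // ∀ b, Nat.card {a // f a = b} = m b}, ∏ b, (m b)! := by
    rw [Nat.card_eq_fintype_card, Fintype.card_sigma]
    refine Finset.sum_congr rfl fun f _ => ?_
    rw [Fintype.card_pi]
    refine Finset.prod_congr rfl fun b _ => ?_
    have hne : Nonempty ({a // (f : α → β) a = b} ≃ Fin (m b)) := by
      apply Fintype.card_eq.mp
      rw [Fintype.card_fin, ← Nat.card_eq_fintype_card]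
      exact f.2 b
    rw [Fintype.card_equiv hne.some, ← Nat.card_eq_fintype_card, f.2 b]
  rw [h2, Finset.sum_const, Finset.card_univ, smul_eq_mul, Nat.card_eq_fintype_card]
end Count

section Main
variable {n : ℕ} (i : Fin n)

lemma eq_rev_iff (a b : Fin n) : (a : ℕ) + (b : ℕ) + 1 = n ↔ a = Fin.rev b := by
  rw [Fin.ext_iff, Fin.val_rev]
  have := a.isLt; have := b.isLt
  omega

lemma rowRev_iff (g : Fin n → Fin n → Fin n) :
    RowRevConsec g i ↔ ∀ j, g i j = Fin.rev j :=
  forall_congr' fun j => eq_rev_iff _ _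

lemma colRev_iff (g : Fin n → Fin n → Fin n) (j : Fin n) :
    ColRevConsec g j ↔ ∀ r, g r j = Fin.rev r :=
  forall_congr' fun r => eq_rev_iff _ _

lemma ne_rev (hi : 2 * ((i : ℕ) + 1) ≠ n + 1) : i ≠ Fin.rev i := by
  intro h
  apply hi
  have h2 := congrArg Fin.val h
  rw [Fin.val_rev] at h2
  have := i.isLt
  omega

/-- combined predicate 1 -/
def PP (g : Fin n → Fin n → Fin n) : Prop :=
  RowConsec g i ∧ ColConsec g i ∧ ColRevConsec g (Fin.rev i)

/-- combined predicate 2 -/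
def QQ (g : Fin n → Fin n → Fin n) : Prop :=
  RowRevConsec g i ∧ ColRevConsec g i ∧ ColConsec g (Fin.rev i)

lemma split_lemma (hi : 2 * ((i : ℕ) + 1) ≠ n + 1) (g : Fin n → Fin n → Fin n) :
    ((RowConsec g i ∨ RowRevConsec g i) ∧ (ColConsec g i ∨ ColRevConsec g i) ∧
      (ColConsec g (Fin.rev i) ∨ ColRevConsec g (Fin.rev i))) ↔ (PP i g ∨ QQ i g) := by
  have hii := ne_rev i hi
  constructor
  · rintro ⟨hR | hR, hC, hD⟩
    · left
      refine ⟨hR, ?_, ?_⟩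
      · rcases hC with hC | hC
        · exact hC
        · exfalso
          have h1 := hR i
          have h2 := hC i
          rw [h1] at h2
          exact hi (by omega)
      · rcases hD with hD | hD
        · exfalso
          have h1 := hR (Fin.rev i)
          have h2 := hD i
          rw [h1] at h2
          exact hii h2.symm
        · exact hD
    · right
      refine ⟨hR, ?_, ?_⟩
      · rcases hC with hC | hC
        · exfalso
          have h1 := (rowRev_iff i g).mp hR i
          have h2 := hC i
          rw [h1] at h2
          exact hii h2.symm
        · exact hC
      · rcases hD with hD | hD
        · exact hD
        · exfalso
          have h1 := (rowRev_iff i g).mp hR (Fin.rev i)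
          rw [Fin.rev_rev] at h1
          have h2 := (colRev_iff g (Fin.rev i)).mp hD i
          rw [h1] at h2
          exact hii h2
  · rintro (⟨h1, h2, h3⟩ | ⟨h1, h2, h3⟩)
    · exact ⟨Or.inl h1, Or.inl h2, Or.inr h3⟩
    · exact ⟨Or.inr h1, Or.inr h2, Or.inl h3⟩

/-- remaining domain -/
def Sdom (n : ℕ) (i : Fin n) : Type :=
  {r : Fin n // r ≠ i} × {c : Fin n // c ≠ i ∧ c ≠ Fin.rev i}

instance : Fintype (Sdom n i) := instFintypeProd _ _
instance : DecidableEq (Sdom n i) := instDecidableEqProd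

/-- multiplicities -/
def mfun (n : ℕ) (i : Fin n) (k : Fin n) : ℕ :=
  if k = i ∨ k = Fin.rev i then n - 2 else n - 3

/-- extension of a partial filling -/
def ExtFill (f : Sdom n i → Fin n) : Fin n → Fin n → Fin n := fun r c =>
  if hc : c = i then r
  else if hc' : c = Fin.rev i then Fin.rev r
  else if hr : r = i then c
  else f (⟨r, hr⟩, ⟨c, hc, hc'⟩)

lemma fixedFilter (g : Fin n → Fin n → Fin n) (hP : PP i g) (k : Fin n) :
    (univ.filter fun p : Fin n × Fin n =>
        g p.1 p.2 = k ∧ (p.1 = i ∨ p.2 = i ∨ p.2 = Fin.rev i)) =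
      {(i, k), (k, i), (Fin.rev k, Fin.rev i)} := by
  obtain ⟨hR, hC, hD⟩ := hP
  have hD' := (colRev_iff g (Fin.rev i)).mp hD
  ext ⟨r, c⟩
  simp only [mem_filter, mem_univ, true_and, mem_insert, mem_singleton, Prod.mk.injEq]
  constructor
  · rintro ⟨hg, h | h | h⟩
    · subst h
      rw [hR c] at hg
      exact Or.inl ⟨rfl, hg⟩
    · subst h
      rw [hC r] at hg
      exact Or.inr (Or.inl ⟨hg, rfl⟩)
    · subst h
      rw [hD' r] at hg
      refine Or.inr (Or.inr ⟨?_, rfl⟩)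
      rw [← hg, Fin.rev_rev]
  · rintro (⟨h1, h2⟩ | ⟨h1, h2⟩ | ⟨h1, h2⟩)
    · refine ⟨?_, Or.inl h1⟩
      rw [h1, hR c]; exact h2
    · refine ⟨?_, Or.inr (Or.inl h2)⟩
      rw [h2, hC r]; exact h1
    · refine ⟨?_, Or.inr (Or.inr h2)⟩
      rw [h2, hD' r, h1, Fin.rev_rev]

lemma fixedCard (hn : 3 ≤ n) (hi : 2 * ((i : ℕ) + 1) ≠ n + 1) (k : Fin n) :
    ({(i, k), (k, i), (Fin.rev k, Fin.rev i)} : Finset (Fin n × Fin n)).card + mfun n i k = n := by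
  have hii := ne_rev i hi
  by_cases h1 : k = i
  · subst h1
    rw [Finset.insert_idem]
    rw [Finset.card_insert_of_notMem (by
      simp only [mem_singleton, Prod.mk.injEq, not_and]
      intro h; exact absurd h hii)]
    rw [Finset.card_singleton]
    have : mfun n k k = n - 2 := by simp [mfun]
    rw [this]
    omega
  · by_cases h2 : k = Fin.rev i
    · subst h2
      rw [Fin.rev_rev]
      have hset : ({(i, Fin.rev i), (Fin.rev i, i), (i, Fin.rev i)} :
          Finset (Fin n × Fin n)) = {(i, Fin.rev i), (Fin.rev i, i)} := by
        ext x
        simp only [mem_insert, mem_singleton]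
        tauto
      rw [hset]
      rw [Finset.card_insert_of_notMem (by
        simp only [mem_singleton, Prod.mk.injEq, not_and]
        intro h; exact absurd h hii)]
      rw [Finset.card_singleton]
      have : mfun n i (Fin.rev i) = n - 2 := by simp [mfun]
      rw [this]
      have := i.isLt
      omega
    · have hki : Fin.rev k ≠ i := by
        intro h
        apply h2
        rw [← h, Fin.rev_rev]
      rw [Finset.card_insert_of_notMem (by
        simp only [mem_insert, mem_singleton, Prod.mk.injEq, not_or, not_and]
        exact ⟨fun h _ => h1 h.symm, fun h _ => hki h.symm⟩)]
      rw [Finset.card_insert_of_notMem (by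
        simp only [mem_singleton, Prod.mk.injEq, not_and]
        intro _; exact hii)]
      rw [Finset.card_singleton]
      have : mfun n i k = n - 3 := by simp [mfun, h1, h2]
      rw [this]
      omega

/-- off-border fiber equivalence -/
def offEquiv (g : Fin n → Fin n → Fin n) (k : Fin n) :
    {p : Fin n × Fin n // g p.1 p.2 = k ∧ ¬(p.1 = i ∨ p.2 = i ∨ p.2 = Fin.rev i)} ≃
      {s : Sdom n i // g s.1.1 s.2.1 = k} where
  toFun x := ⟨(⟨x.1.1, fun h => x.2.2 (Or.inl h)⟩,
    ⟨x.1.2, fun h => x.2.2 (Or.inr (Or.inl h)), fun h => x.2.2 (Or.inr (Or.inr h))⟩), x.2.1⟩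
  invFun s := ⟨(s.1.1.1, s.1.2.1), s.2, by
    push_neg
    exact ⟨s.1.1.2, s.1.2.2.1, s.1.2.2.2⟩⟩
  left_inv x := rfl
  right_inv s := rfl

lemma fiberSplit (g : Fin n → Fin n → Fin n) (hP : PP i g) (k : Fin n) :
    Nat.card {p : Fin n × Fin n // g p.1 p.2 = k} =
      ({(i, k), (k, i), (Fin.rev k, Fin.rev i)} : Finset (Fin n × Fin n)).card +
        Nat.card {s : Sdom n i // g s.1.1 s.2.1 = k} := by
  classical
  rw [Nat.card_eq_fintype_card, Fintype.card_subtype]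
  rw [← Nat.card_congr (offEquiv i g k), Nat.card_eq_fintype_card, Fintype.card_subtype]
  rw [← fixedFilter i g hP k]
  have h1 := Finset.card_filter_add_card_filter_not
    (s := univ.filter fun p : Fin n × Fin n => g p.1 p.2 = k)
    (p := fun p : Fin n × Fin n => p.1 = i ∨ p.2 = i ∨ p.2 = Fin.rev i)
  rw [Finset.filter_filter, Finset.filter_filter] at h1
  omega

lemma equi_iff (hn : 3 ≤ n) (hi : 2 * ((i : ℕ) + 1) ≠ n + 1)
    (g : Fin n → Fin n → Fin n) (hP : PP i g) :
    IsEquiSquare n g ↔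
      ∀ k, Nat.card {s : Sdom n i // g s.1.1 s.2.1 = k} = mfun n i k := by
  unfold IsEquiSquare
  refine forall_congr' fun k => ?_
  rw [fiberSplit i g hP k]
  have h2 := fixedCard i hn hi k
  omega

lemma ExtFill_PP (hi : 2 * ((i : ℕ) + 1) ≠ n + 1) (f : Sdom n i → Fin n) :
    PP i (ExtFill i f) := by
  have hii := ne_rev i hi
  refine ⟨?_, ?_, ?_⟩
  · intro c
    unfold ExtFill
    split_ifs with h1 h2 h3
    · exact h1.symm
    · exact h2.symm
    · rfl
    · exact absurd rfl h3
  · intro r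
    simp [ExtFill]
  · intro r
    unfold ExtFill
    rw [dif_neg (fun h => hii h.symm), dif_pos rfl, Fin.val_rev]
    have := r.isLt
    omega

lemma ExtFill_res (f : Sdom n i → Fin n) (s : Sdom n i) :
    ExtFill i f s.1.1 s.2.1 = f s := by
  obtain ⟨⟨r, hr⟩, ⟨c, hc, hc'⟩⟩ := s
  simp only [ExtFill, dif_neg hc, dif_neg hc', dif_neg hr]

/-- main restriction equivalence -/
def resEquiv (hn : 3 ≤ n) (hi : 2 * ((i : ℕ) + 1) ≠ n + 1) :
    {g : Fin n → Fin n → Fin n // IsEquiSquare n g ∧ PP i g} ≃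
      {f : Sdom n i → Fin n // ∀ k, Nat.card {s // f s = k} = mfun n i k} where
  toFun g := ⟨fun s => g.1 s.1.1 s.2.1, (equi_iff i hn hi g.1 g.2.2).mp g.2.1⟩
  invFun f := ⟨ExtFill i f.1, by
    have hP := ExtFill_PP i hi f.1
    refine ⟨(equi_iff i hn hi _ hP).mpr fun k => ?_, hP⟩
    rw [Nat.card_congr (Equiv.subtypeEquivRight fun s => by rw [ExtFill_res i f.1 s])]
    exact f.2 k⟩
  left_inv g := by
    apply Subtype.ext
    funext r c
    obtain ⟨hR, hC, hD⟩ := g.2.2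
    have hD' := (colRev_iff g.1 (Fin.rev i)).mp hD
    show ExtFill i _ r c = g.1 r c
    unfold ExtFill
    split_ifs with h1 h2 h3
    · rw [h1, hC r]
    · rw [h2, hD' r]
    · rw [h3, hR c]
    · rfl
  right_inv f := by
    apply Subtype.ext
    funext s
    exact ExtFill_res i f.1 s

/-- value-reversal equivalence between `PP`-squares and `QQ`-squares -/
def revSqEquiv (hn : 3 ≤ n) (hi : 2 * ((i : ℕ) + 1) ≠ n + 1) :
    {g : Fin n → Fin n → Fin n // IsEquiSquare n g ∧ PP i g} ≃
      {g : Fin n → Fin n → Fin n // IsEquiSquare n g ∧ QQ i g} where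
  toFun g := ⟨fun r c => Fin.rev (g.1 r c), by
    obtain ⟨hE, hR, hC, hD⟩ := g.2
    have hD' := (colRev_iff g.1 (Fin.rev i)).mp hD
    refine ⟨fun k => ?_, ?_, ?_, ?_⟩
    · rw [Nat.card_congr (Equiv.subtypeEquivRight (q := fun p : Fin n × Fin n =>
        g.1 p.1 p.2 = Fin.rev k) fun p => ?_)]
      · exact hE (Fin.rev k)
      · constructor
        · intro h; dsimp only at h ⊢; rw [← h, Fin.rev_rev]
        · intro h; dsimp only at h ⊢; rw [h, Fin.rev_rev]
    · intro j
      dsimp only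
      rw [hR j, Fin.val_rev]
      have := j.isLt
      omega
    · intro r
      dsimp only
      rw [hC r, Fin.val_rev]
      have := r.isLt
      omega
    · intro r
      dsimp only
      rw [hD' r, Fin.rev_rev]⟩
  invFun g := ⟨fun r c => Fin.rev (g.1 r c), by
    obtain ⟨hE, hR, hC, hD⟩ := g.2
    have hR' := (rowRev_iff i g.1).mp hR
    have hC' := (colRev_iff g.1 i).mp hC
    refine ⟨fun k => ?_, ?_, ?_, ?_⟩
    · rw [Nat.card_congr (Equiv.subtypeEquivRight (q := fun p : Fin n × Fin n =>
        g.1 p.1 p.2 = Fin.rev k) fun p => ?_)]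
      · exact hE (Fin.rev k)
      · constructor
        · intro h; dsimp only at h ⊢; rw [← h, Fin.rev_rev]
        · intro h; dsimp only at h ⊢; rw [h, Fin.rev_rev]
    · intro j
      dsimp only
      rw [hR' j, Fin.rev_rev]
    · intro r
      dsimp only
      rw [hC' r, Fin.rev_rev]
    · intro r
      dsimp only
      rw [hD r, Fin.val_rev]
      have := r.isLt
      omega⟩
  left_inv g := by
    apply Subtype.ext
    funext r c
    simp [Fin.rev_rev]
  right_inv g := by
    apply Subtype.ext
    funext r c
    simp [Fin.rev_rev]

lemma filter_pair (hi : 2 * ((i : ℕ) + 1) ≠ n + 1) :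
    (univ.filter fun k : Fin n => k = i ∨ k = Fin.rev i) = {i, Fin.rev i} := by
  ext k
  simp [mem_insert]

lemma card_pair (hi : 2 * ((i : ℕ) + 1) ≠ n + 1) :
    ({i, Fin.rev i} : Finset (Fin n)).card = 2 := by
  rw [Finset.card_insert_of_notMem (by simp [ne_rev i hi]), Finset.card_singleton]

lemma card_not_pair (hn : 3 ≤ n) (hi : 2 * ((i : ℕ) + 1) ≠ n + 1) :
    (univ.filter fun k : Fin n => ¬(k = i ∨ k = Fin.rev i)).card = n - 2 := by
  have h1 := Finset.card_filter_add_card_filter_not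
    (s := (univ : Finset (Fin n))) (p := fun k : Fin n => k = i ∨ k = Fin.rev i)
  rw [filter_pair i hi, card_pair i hi, Finset.card_univ, Fintype.card_fin] at h1
  omega

lemma card_Sdom (hn : 3 ≤ n) (hi : 2 * ((i : ℕ) + 1) ≠ n + 1) :
    Fintype.card (Sdom n i) = (n - 1) * (n - 2) := by
  classical
  rw [show Fintype.card (Sdom n i) =
    Fintype.card {r : Fin n // r ≠ i} * Fintype.card {c : Fin n // c ≠ i ∧ c ≠ Fin.rev i}
    from Fintype.card_prod _ _]
  have h1 : Fintype.card {r : Fin n // r ≠ i} = n - 1 := by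
    rw [Fintype.card_subtype]
    rw [show (univ.filter fun r : Fin n => r ≠ i) = univ.erase i from Finset.filter_ne' univ i]
    rw [Finset.card_erase_of_mem (mem_univ i), Finset.card_univ, Fintype.card_fin]
  have h2 : Fintype.card {c : Fin n // c ≠ i ∧ c ≠ Fin.rev i} = n - 2 := by
    rw [Fintype.card_subtype]
    rw [← card_not_pair i hn hi]
    congr 1
    apply Finset.filter_congr
    intro k _
    push_neg
    rfl
  rw [h1, h2]

lemma sum_mfun (hn : 3 ≤ n) (hi : 2 * ((i : ℕ) + 1) ≠ n + 1) :
    ∑ k : Fin n, mfun n i k = Fintype.card (Sdom n i) := by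
  classical
  rw [card_Sdom i hn hi]
  unfold mfun
  rw [Finset.sum_ite, Finset.sum_const, Finset.sum_const,
    filter_pair i hi, card_pair i hi, card_not_pair i hn hi, smul_eq_mul, smul_eq_mul]
  obtain ⟨t, rfl⟩ : ∃ t, n = t + 3 := ⟨n - 3, by omega⟩
  have e1 : t + 3 - 2 = t + 1 := by omega
  have e2 : t + 3 - 3 = t := by omega
  have e3 : t + 3 - 1 = t + 2 := by omega
  rw [e1, e2, e3]
  ring

lemma prod_mfun (hn : 3 ≤ n) (hi : 2 * ((i : ℕ) + 1) ≠ n + 1) :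
    ∏ k : Fin n, (mfun n i k)! = (n - 2)! ^ 2 * (n - 3)! ^ (n - 2) := by
  classical
  unfold mfun
  rw [show (fun k : Fin n => (if k = i ∨ k = Fin.rev i then n - 2 else n - 3)!) =
    (fun k : Fin n => if k = i ∨ k = Fin.rev i then (n - 2)! else (n - 3)!) from
    funext fun k => by split_ifs <;> rfl]
  rw [Finset.prod_ite, Finset.prod_const, Finset.prod_const,
    filter_pair i hi, card_pair i hi, card_not_pair i hn hi]

end Main

lemma nat_identity (n : ℕ) (hn : 3 ≤ n) : (n - 1) * (n - 2) = n ^ 2 - 3 * n + 2 := by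
  obtain ⟨t, rfl⟩ : ∃ t, n = t + 3 := ⟨n - 3, by omega⟩
  have h1 : (t + 3 - 1) * (t + 3 - 2) = t * t + 3 * t + 2 := by
    have e1 : t + 3 - 1 = t + 2 := by omega
    have e2 : t + 3 - 2 = t + 1 := by omega
    rw [e1, e2]; ring
  have h2 : (t + 3) ^ 2 = t * t + 6 * t + 9 := by ring
  omega

/-- For `n ≥ 3` and a non-middle index `i` with opposite index `i' = n+1−i`
(1-indexed; here `i' = Fin.rev i`), the number of equi-`n`-squares whose row `i`,
column `i`, and column `i'` are each consecutive or reverse-consecutive equals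
`2·(n²−3n+2)! / ((n−2)!²·(n−3)!^{n−2})`. -/
theorem card_rowI_colI_colI' (n : ℕ) (hn : 3 ≤ n) (i : Fin n)
    (hi : 2 * ((i : ℕ) + 1) ≠ n + 1) :
    (Nat.card {g : Fin n → Fin n → Fin n //
        IsEquiSquare n g ∧ (RowConsec g i ∨ RowRevConsec g i) ∧
          (ColConsec g i ∨ ColRevConsec g i) ∧
          (ColConsec g (Fin.rev i) ∨ ColRevConsec g (Fin.rev i))} : ℚ) =
      2 * ((n ^ 2 - 3 * n + 2)! : ℚ) / (((n - 2)! : ℚ) ^ 2 * ((n - 3)! : ℚ) ^ (n - 2)) := by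
  classical
  have e1 : {g : Fin n → Fin n → Fin n //
      IsEquiSquare n g ∧ (RowConsec g i ∨ RowRevConsec g i) ∧
        (ColConsec g i ∨ ColRevConsec g i) ∧
        (ColConsec g (Fin.rev i) ∨ ColRevConsec g (Fin.rev i))} ≃
      {g : Fin n → Fin n → Fin n //
        (IsEquiSquare n g ∧ PP i g) ∨ (IsEquiSquare n g ∧ QQ i g)} :=
    Equiv.subtypeEquivRight fun g => by
      rw [← and_or_left]
      exact and_congr_right fun _ => split_lemma i hi g
  rw [Nat.card_congr e1]
  have hdisj : Disjoint
      (univ.filter fun g : Fin n → Fin n → Fin n => IsEquiSquare n g ∧ PP i g)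
      (univ.filter fun g : Fin n → Fin n → Fin n => IsEquiSquare n g ∧ QQ i g) := by
    rw [Finset.disjoint_left]
    rintro g hg1 hg2
    rw [Finset.mem_filter] at hg1 hg2
    have h1 := hg1.2.2.1 ⟨0, by omega⟩
    have h2 := hg2.2.2.1 ⟨0, by omega⟩
    rw [h1] at h2
    simp only [Fin.mk_zero] at h2
    simp at h2
    omega
  have hsplit : Nat.card {g : Fin n → Fin n → Fin n //
        (IsEquiSquare n g ∧ PP i g) ∨ (IsEquiSquare n g ∧ QQ i g)} =
      Nat.card {g : Fin n → Fin n → Fin n // IsEquiSquare n g ∧ PP i g} +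
        Nat.card {g : Fin n → Fin n → Fin n // IsEquiSquare n g ∧ QQ i g} := by
    rw [Nat.card_eq_fintype_card, Fintype.card_subtype, Finset.filter_or,
      Finset.card_union_of_disjoint hdisj, Nat.card_eq_fintype_card, Fintype.card_subtype,
      Nat.card_eq_fintype_card, Fintype.card_subtype]
  rw [hsplit, ← Nat.card_congr (revSqEquiv i hn hi), Nat.card_congr (resEquiv i hn hi)]
  have hkey := card_fiber_count (mfun n i) (sum_mfun i hn hi)
  rw [prod_mfun i hn hi, card_Sdom i hn hi] at hkey
  rw [nat_identity n hn] at hkey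
  have hkeyQ : ((Nat.card {f : Sdom n i → Fin n //
        ∀ k, Nat.card {s // f s = k} = mfun n i k} : ℕ) : ℚ) *
        (((n - 2)! : ℚ) ^ 2 * ((n - 3)! : ℚ) ^ (n - 2)) =
      ((n ^ 2 - 3 * n + 2)! : ℚ) := by exact_mod_cast hkey
  have hden : (((n - 2)! : ℚ)) ^ 2 * ((n - 3)! : ℚ) ^ (n - 2) ≠ 0 := by positivity
  rw [eq_div_iff hden]
  push_cast
  linear_combination 2 * hkeyQ
end

section
/- The proportion of equi-n-squares that are consecutive tends to zero: |Σ_n|/|Ω_n| → 0 as n → ∞, where Ω_n is the set of equi-n-squares and Σ_n the set of consecutive equi-n-squares. -/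
open Nat Finset Filter

/-- A consecutive equi-`n`-square: an equi-`n`-square with at least one consecutive or
reverse-consecutive row or column. -/
def IsConsecEquiSquare (n : ℕ) (g : Fin n → Fin n → Fin n) : Prop :=
  IsEquiSquare n g ∧
    ((∃ i : Fin n, RowConsec g i ∨ RowRevConsec g i) ∨
      (∃ j : Fin n, ColConsec g j ∨ ColRevConsec g j))

/-! Replacing a row of an equi-square that is a permutation `π` by any other permutation gives
again an equi-square, and the old square is recovered by writing `π` back. Hence for a fixed row
`i` and permutation `π` there are at most `|Ω_n| / n!` equi-squares whose row `i` is `π`, and by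
transposition the same holds for columns. A consecutive equi-square has one of `4n` such
prescribed lines, so `|Σ_n| / |Ω_n| ≤ 4n / n! → 0`. -/

open Function Equiv

theorem card_subtype_or_le {α : Type*} [Finite α] (p q : α → Prop) :
    Nat.card {a // p a ∨ q a} ≤ Nat.card {a // p a} + Nat.card {a // q a} :=
  Set.ncard_union_le {a | p a} {a | q a}

theorem card_subtype_exists_le {α ι : Type*} [Finite α] [Fintype ι] (p : ι → α → Prop) :
    Nat.card {a // ∃ i, p i a} ≤ ∑ i, Nat.card {a // p i a} := by
  have h := Set.ncard_iUnion_le_of_fintype fun i => {a | p i a}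
  rwa [← Set.ofPred_exists] at h

theorem Fin.val_add_val_add_one_eq_iff {n : ℕ} {a b : Fin n} :
    (a : ℕ) + b + 1 = n ↔ a = b.rev := by
  have := a.isLt
  rw [Fin.ext_iff, Fin.val_rev]
  omega

namespace IsEquiSquare

variable {n : ℕ} {g : Fin n → Fin n → Fin n}

theorem swap (hg : IsEquiSquare n g) : IsEquiSquare n (Function.swap g) := fun k =>
  (Nat.card_congr ((prodComm _ _).subtypeEquiv fun _ => Iff.rfl)).trans (hg k)

theorem swap_iff : IsEquiSquare n (Function.swap g) ↔ IsEquiSquare n g := ⟨swap, swap⟩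

theorem update_comp_perm (hg : IsEquiSquare n g) (i : Fin n) (τ : Perm (Fin n)) :
    IsEquiSquare n (update g i (g i ∘ τ)) := fun k =>
  (Nat.card_congr ((prodShear (Equiv.refl _) fun a => if a = i then τ else Equiv.refl _)
    |>.subtypeEquiv (by rintro ⟨a, b⟩; by_cases ha : a = i <;> simp [ha]))).trans (hg k)

theorem update_perm {i : Fin n} {π : Perm (Fin n)} (hg : IsEquiSquare n g) (hi : g i = π)
    (σ : Perm (Fin n)) : IsEquiSquare n (update g i σ) := by
  have hσ : g i ∘ ⇑(π⁻¹ * σ) = σ := by rw [hi, ← Perm.coe_mul, mul_inv_cancel_left]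
  simpa only [hσ] using hg.update_comp_perm i (π⁻¹ * σ)

end IsEquiSquare

section Lines

variable {n : ℕ}

def RowOrColEq (g : Fin n → Fin n → Fin n) (i : Fin n) (π : Perm (Fin n)) : Prop :=
  g i = π ∨ (fun a => g a i) = π

variable {g : Fin n → Fin n → Fin n}

theorem rowConsec_iff {i : Fin n} : RowConsec g i ↔ g i = (1 : Perm (Fin n)) := funext_iff.symm

theorem colConsec_iff {j : Fin n} : ColConsec g j ↔ (fun i => g i j) = (1 : Perm (Fin n)) :=
  funext_iff.symm

theorem rowRevConsec_iff {i : Fin n} : RowRevConsec g i ↔ g i = Fin.revPerm := by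
  simp only [RowRevConsec, Fin.val_add_val_add_one_eq_iff, funext_iff, Fin.revPerm_apply]

theorem colRevConsec_iff {j : Fin n} : ColRevConsec g j ↔ (fun i => g i j) = Fin.revPerm := by
  simp only [ColRevConsec, Fin.val_add_val_add_one_eq_iff, funext_iff, Fin.revPerm_apply]

theorem isConsecEquiSquare_iff : IsConsecEquiSquare n g ↔
    ∃ i, (IsEquiSquare n g ∧ RowOrColEq g i 1) ∨
      (IsEquiSquare n g ∧ RowOrColEq g i Fin.revPerm) := by
  simp only [IsConsecEquiSquare, RowOrColEq, rowConsec_iff, rowRevConsec_iff, colConsec_iff,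
    colRevConsec_iff, exists_or, exists_and_left]
  tauto

theorem factorial_mul_card_row_eq_le (i : Fin n) (π : Perm (Fin n)) :
    n ! * Nat.card {g // IsEquiSquare n g ∧ g i = π} ≤ Nat.card {g // IsEquiSquare n g} := by
  have hinj : Injective fun x : Perm (Fin n) × {g // IsEquiSquare n g ∧ g i = π} =>
      (⟨update x.2.1 i x.1, x.2.2.1.update_perm x.2.2.2 x.1⟩ : {g // IsEquiSquare n g}) := by
    rintro ⟨σ, g, _, hg⟩ ⟨σ', g', _, hg'⟩ heq
    have h : update g i σ = update g' i σ' := congrArg Subtype.val heq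
    have hσ : σ = σ' := DFunLike.coe_injective (by simpa using congrFun h i)
    have hgg' : g = g' := by
      rw [← update_eq_self i g, ← update_eq_self i g', hg, hg',
        ← update_idem (σ : Fin n → Fin n) _ g, h, update_idem]
    subst hσ hgg'
    rfl
  simpa [Nat.card_prod, Fintype.card_perm] using Nat.card_le_card_of_injective _ hinj

theorem factorial_mul_card_col_eq_le (j : Fin n) (π : Perm (Fin n)) :
    n ! * Nat.card {g // IsEquiSquare n g ∧ (fun i => g i j) = π} ≤
      Nat.card {g // IsEquiSquare n g} := by
  have e : {g // IsEquiSquare n g ∧ (fun i => g i j) = π} ≃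
      {g // IsEquiSquare n g ∧ g j = π} :=
    (piComm _).subtypeEquiv fun _ => and_congr_left' IsEquiSquare.swap_iff.symm
  rw [Nat.card_congr e]
  exact factorial_mul_card_row_eq_le j π

theorem factorial_mul_card_rowOrColEq_le (i : Fin n) (π : Perm (Fin n)) :
    n ! * Nat.card {g // IsEquiSquare n g ∧ RowOrColEq g i π} ≤
      2 * Nat.card {g // IsEquiSquare n g} := by
  have hsplit : Nat.card {g // IsEquiSquare n g ∧ RowOrColEq g i π} ≤
      Nat.card {g // IsEquiSquare n g ∧ g i = π} +
        Nat.card {g // IsEquiSquare n g ∧ (fun a => g a i) = π} := by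
    simpa only [RowOrColEq, and_or_left] using card_subtype_or_le _ _
  calc n ! * Nat.card {g // IsEquiSquare n g ∧ RowOrColEq g i π}
      _ ≤ n ! * Nat.card {g // IsEquiSquare n g ∧ g i = π} +
          n ! * Nat.card {g // IsEquiSquare n g ∧ (fun a => g a i) = π} := by
        rw [← mul_add]; exact Nat.mul_le_mul_left _ hsplit
      _ ≤ 2 * Nat.card {g // IsEquiSquare n g} := by
        rw [two_mul]
        exact Nat.add_le_add (factorial_mul_card_row_eq_le i π) (factorial_mul_card_col_eq_le i π)

end Lines

theorem factorial_mul_card_isConsecEquiSquare_le (n : ℕ) :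
    n ! * Nat.card {g // IsConsecEquiSquare n g} ≤ 4 * n * Nat.card {g // IsEquiSquare n g} := by
  rw [Nat.card_congr (Equiv.subtypeEquivRight fun _ => isConsecEquiSquare_iff)]
  calc n ! * Nat.card {g // ∃ i, (IsEquiSquare n g ∧ RowOrColEq g i 1) ∨
        (IsEquiSquare n g ∧ RowOrColEq g i Fin.revPerm)}
      _ ≤ n ! * ∑ i, (Nat.card {g // IsEquiSquare n g ∧ RowOrColEq g i 1} +
          Nat.card {g // IsEquiSquare n g ∧ RowOrColEq g i Fin.revPerm}) :=
        Nat.mul_le_mul_left _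
          ((card_subtype_exists_le _).trans (sum_le_sum fun _ _ => card_subtype_or_le _ _))
      _ ≤ ∑ _i : Fin n,
          (2 * Nat.card {g // IsEquiSquare n g} + 2 * Nat.card {g // IsEquiSquare n g}) := by
        simp only [mul_sum, mul_add]
        exact sum_le_sum fun i _ => Nat.add_le_add (factorial_mul_card_rowOrColEq_le i 1)
          (factorial_mul_card_rowOrColEq_le i Fin.revPerm)
      _ = 4 * n * Nat.card {g // IsEquiSquare n g} := by
        rw [sum_const, Finset.card_univ, Fintype.card_fin, smul_eq_mul]; ring

theorem card_isConsecEquiSquare_div_le (n : ℕ) :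
    (Nat.card {g // IsConsecEquiSquare n g} : ℝ) / Nat.card {g // IsEquiSquare n g} ≤
      4 * (n / n !) := by
  have h : (n ! : ℝ) * Nat.card {g // IsConsecEquiSquare n g} ≤
      4 * n * Nat.card {g // IsEquiSquare n g} := by
    exact_mod_cast factorial_mul_card_isConsecEquiSquare_le n
  refine div_le_of_le_mul₀ (by positivity) (by positivity) ?_
  rw [mul_div_assoc', div_mul_eq_mul_div, le_div_iff₀ (by positivity)]
  linarith

theorem tendsto_natCast_div_factorial_atTop :
    Tendsto (fun n : ℕ => (n : ℝ) / n !) atTop (nhds 0) :=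
  squeeze_zero (fun _ => by positivity)
    (fun n => div_le_div_of_nonneg_right (by exact_mod_cast n.lt_two_pow_self.le) (by positivity))
    (FloorSemiring.tendsto_pow_div_factorial_atTop (2 : ℝ))

/-- The proportion of equi-`n`-squares that are consecutive tends to zero. -/
theorem prob_consecEquiSquares_tendsto_zero :
    Filter.Tendsto
      (fun n : ℕ =>
        (Nat.card {g : Fin n → Fin n → Fin n // IsConsecEquiSquare n g} : ℝ) /
          (Nat.card {g : Fin n → Fin n → Fin n // IsEquiSquare n g} : ℝ))
      Filter.atTop (nhds 0) := by
  refine squeeze_zero (fun _ => by positivity) card_isConsecEquiSquare_div_le ?_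
  simpa using tendsto_natCast_div_factorial_atTop.const_mul 4
end

section
/- Let n ≥ 1, let L_n be the number of Latin squares of order n, and let K_n be the number of Latin squares of order n having at least two consecutive lines, i.e. at least two indices among rows and columns whose line is in consecutive order. Then n! · K_n ≤ n · L_n (equivalently, the proportion of such Latin squares is at most n/n!). -/
open Nat Finset Filter

/-- A Latin square of order `n`: every row and every column is a bijection of `Fin n`. -/
def IsLatinSquare (n : ℕ) (g : Fin n → Fin n → Fin n) : Prop :=
  (∀ i : Fin n, Function.Bijective (g i)) ∧
    (∀ j : Fin n, Function.Bijective (fun i => g i j))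

lemma exists_row_consec {n : ℕ} (hn : 1 ≤ n) (g : Fin n → Fin n → Fin n)
    (hg : IsLatinSquare n g)
    (h2 : 2 ≤ Nat.card {i : Fin n // RowConsec g i} +
        Nat.card {j : Fin n // ColConsec g j}) : ∃ i, RowConsec g i := by
  by_contra hno
  simp only [not_exists] at hno
  have hempty : IsEmpty {i : Fin n // RowConsec g i} :=
    ⟨fun ⟨i, hi⟩ => hno i hi⟩
  rw [Nat.card_of_isEmpty, zero_add] at h2
  have hnt : Nontrivial {j : Fin n // ColConsec g j} :=
    Finite.one_lt_card_iff_nontrivial.mp (by omega)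
  obtain ⟨⟨j, hj⟩, ⟨j', hj'⟩, hne⟩ := hnt.exists_pair_ne
  have i0 : Fin n := ⟨0, hn⟩
  have : j = j' := (hg.1 i0).1 (by rw [hj i0, hj' i0])
  exact hne (Subtype.ext this)

/-- The number `K_n` of Latin squares of order `n` with at least two consecutive lines
(rows or columns in consecutive order) satisfies `n! · K_n ≤ n · L_n`. -/
theorem latinSquares_two_consec_lines_rare (n : ℕ) (hn : 1 ≤ n) :
    n ! * Nat.card {g : Fin n → Fin n → Fin n // IsLatinSquare n g ∧
        2 ≤ Nat.card {i : Fin n // RowConsec g i} +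
              Nat.card {j : Fin n // ColConsec g j}} ≤
      n * Nat.card {g : Fin n → Fin n → Fin n // IsLatinSquare n g} := by
  classical
  set K := {g : Fin n → Fin n → Fin n // IsLatinSquare n g ∧
        2 ≤ Nat.card {i : Fin n // RowConsec g i} +
              Nat.card {j : Fin n // ColConsec g j}} with hK
  set L := {g : Fin n → Fin n → Fin n // IsLatinSquare n g} with hL
  have hlat : ∀ (σ : Equiv.Perm (Fin n)) (g : Fin n → Fin n → Fin n),
      IsLatinSquare n g → IsLatinSquare n (fun i j => g i (σ j)) := by
    intro σ g hg
    exact ⟨fun i => (hg.1 i).comp σ.bijective, fun j => hg.2 (σ j)⟩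
  let F : Equiv.Perm (Fin n) × K → L × Fin n := fun p =>
    ⟨⟨fun i j => p.2.1 i (p.1 j), hlat p.1 p.2.1 p.2.2.1⟩,
      Classical.choose (exists_row_consec hn p.2.1 p.2.2.1 p.2.2.2)⟩
  have hFinj : Function.Injective F := by
    rintro ⟨σ₁, g₁, hg₁⟩ ⟨σ₂, g₂, hg₂⟩ heq
    have h1 : (fun i j => g₁ i (σ₁ j)) = fun i j => g₂ i (σ₂ j) :=
      congrArg Subtype.val (congrArg Prod.fst heq)
    have hrow₁ := Classical.choose_spec (exists_row_consec hn g₁ hg₁.1 hg₁.2)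
    have hrow₂ := Classical.choose_spec (exists_row_consec hn g₂ hg₂.1 hg₂.2)
    have hi : Classical.choose (exists_row_consec hn g₁ hg₁.1 hg₁.2) =
        Classical.choose (exists_row_consec hn g₂ hg₂.1 hg₂.2) :=
      congrArg Prod.snd heq
    have hσ : σ₁ = σ₂ := by
      ext b
      have := congrFun (congrFun h1
        (Classical.choose (exists_row_consec hn g₁ hg₁.1 hg₁.2))) b
      rw [hrow₁ (σ₁ b)] at this
      rw [this, hi, hrow₂ (σ₂ b)]
    have hg : g₁ = g₂ := by
      funext a c
      have := congrFun (congrFun h1 a) (σ₁.symm c)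
      rw [hσ] at this
      simpa using this
    simp only [Prod.mk.injEq, Subtype.mk.injEq]
    exact ⟨hσ, Subtype.ext hg⟩
  have hle := Nat.card_le_card_of_injective F hFinj
  rw [Nat.card_prod, Nat.card_prod, Nat.card_eq_fintype_card (α := Equiv.Perm (Fin n)),
    Fintype.card_perm, Fintype.card_fin, Nat.card_eq_fintype_card (α := Fin n),
    Fintype.card_fin] at hle
  exact le_of_le_of_eq hle (Nat.mul_comm _ _)
end

section
/- Let G be a finite group, let I and Λ be finite nonempty types, and let P : Λ → I → G be any function (the sandwich matrix). Define a multiplication on S = I × G × Λ by (i,g,λ)·(j,h,μ) := (i, g · (P λ j) · h, μ) (this is the Rees matrix semigroup M(G; I, Λ; P), and this multiplication is associative). Then for every s ∈ S, the number of pairs (a,b) ∈ S × S with a·b = s equals |I|·|G|·|Λ| = |S|. Consequently, the Cayley table of any such finite completely simple semigroup of order n is an equi-n-square. -/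
/-- The multiplication of the Rees matrix semigroup `M(G; I, Λ; P)` on `I × G × Λ`:
`(i,g,λ)·(j,h,μ) = (i, g·(P λ j)·h, μ)`. -/
def reesMul {G I Λ : Type*} [Mul G] (P : Λ → I → G) (a b : I × G × Λ) : I × G × Λ :=
  (a.1, a.2.1 * P a.2.2 b.1 * b.2.1, b.2.2)

/-- The fiber of the Rees multiplication over `s` is equivalent to `I × G × Λ`. -/
def reesFiberEquiv {G I Λ : Type*} [Group G] (P : Λ → I → G) (s : I × G × Λ) :
    {p : (I × G × Λ) × (I × G × Λ) // reesMul P p.1 p.2 = s} ≃ I × G × Λ where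
  toFun p := (p.1.2.1, p.1.1.2.1, p.1.1.2.2)
  invFun q := ⟨((s.1, q.2.1, q.2.2), (q.1, (q.2.1 * P q.2.2 q.1)⁻¹ * s.2.1, s.2.2)),
    by simp [reesMul, mul_assoc]⟩
  left_inv := by
    rintro ⟨⟨⟨i₁, g₁, l₁⟩, ⟨j, h, m⟩⟩, rfl⟩
    simp [reesMul, mul_assoc]
  right_inv q := rfl

/-- The Rees matrix multiplication on `S = I × G × Λ` is associative, and every fiber of
the multiplication map has size `|I|·|G|·|Λ| = |S|`; hence the Cayley table of every
finite completely simple semigroup of order `n` is an equi-`n`-square. -/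
theorem reesMatrixSemigroup_cayley_equiSquare {G I Λ : Type*} [Group G] [Fintype G]
    [Fintype I] [Fintype Λ] [Nonempty I] [Nonempty Λ] (P : Λ → I → G) :
    (∀ a b c : I × G × Λ, reesMul P (reesMul P a b) c = reesMul P a (reesMul P b c)) ∧
      (∀ s : I × G × Λ,
        Nat.card {p : (I × G × Λ) × (I × G × Λ) // reesMul P p.1 p.2 = s} =
          Fintype.card I * Fintype.card G * Fintype.card Λ) ∧
      Fintype.card I * Fintype.card G * Fintype.card Λ = Fintype.card (I × G × Λ) := by
  refine ⟨fun a b c => by simp [reesMul, mul_assoc], fun s => ?_, by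
    simp [Fintype.card_prod]; ring⟩
  rw [Nat.card_congr (reesFiberEquiv P s)]
  simp [Fintype.card_prod]; ring
end
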